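/- arXiv:1809.07997 — 4 statements merged into one kernel-verified Lean document; each statement's English description precedes it below -/
import Mathlib

section
/- Let n ≥ 3 and m ≥ 3. The Cayley graph of the group ℤ/n × ℤ/m with respect to the standard generating set {(1,0),(0,1)} contains a subdivision of the complete bipartite graph K_{3,3} as a subgraph. -/
/-- `G` contains a subdivision of `H` as a subgraph: there are branch vertices (an injection
`f` of the vertices of `H` into `G`) and, for each edge of `H`, a path in `G` between the
corresponding branch vertices, such that these paths are internally disjoint from each other
and from the set of branch vertices. -/
def ContainsSubdivision {V W : Type} (G : SimpleGraph V) (H : SimpleGraph W) : Prop :=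
  ∃ (f : W ↪ V) (p : ∀ {a b : W}, H.Adj a b → G.Walk (f a) (f b)),
    (∀ {a b : W} (h : H.Adj a b), (p h).IsPath) ∧
    (∀ {a b : W} (h : H.Adj a b), p h.symm = (p h).reverse) ∧
    (∀ {a b : W} (h : H.Adj a b) (c : W), f c ∈ (p h).support → c = a ∨ c = b) ∧
    (∀ {a b c d : W} (h₁ : H.Adj a b) (h₂ : H.Adj c d), s(a, b) ≠ s(c, d) →
      ∀ x, x ∈ (p h₁).support → x ∈ (p h₂).support → ∃ w : W, x = f w)

/-- Planarity, via the Kuratowski (Dirac–Schuster in the infinite case) characterization: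
a simple graph is planar iff it contains no subdivision of `K₅` or `K₃,₃` as a subgraph. -/
def IsPlanar {V : Type} (G : SimpleGraph V) : Prop :=
  ¬ ContainsSubdivision G (SimpleGraph.completeGraph (Fin 5)) ∧
  ¬ ContainsSubdivision G (completeBipartiteGraph (Fin 3) (Fin 3))

/-- The (simple, undirected) Cayley graph of a group w.r.t. a generating set. -/
def cayleyGraph (G : Type) [Group G] (S : Set G) : SimpleGraph G :=
  SimpleGraph.fromRel (fun g h => ∃ s ∈ S, h = g * s)

/-- The (simple, undirected) Cayley graph of an additive group w.r.t. a generating set. -/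
def cayleyGraphAdd (G : Type) [AddGroup G] (S : Set G) : SimpleGraph G :=
  SimpleGraph.fromRel (fun g h => ∃ s ∈ S, h = g + s)

open scoped commutatorElement

/-- The relations of the graph product of finite cyclic groups over the labelled graph `Γ`:
the vertex group at `v` is cyclic of order `o v`, and generators of adjacent vertex groups
commute. -/
def graphProductRels {V : Type} (Γ : SimpleGraph V) (o : V → ℕ) : Set (FreeGroup V) :=
  {r | (∃ v, r = FreeGroup.of v ^ o v) ∨
       (∃ v w, Γ.Adj v w ∧ r = ⁅FreeGroup.of v, FreeGroup.of w⁆)}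

/-- The graph product of finite cyclic groups over the labelled graph `Γ`. -/
def GraphProduct {V : Type} (Γ : SimpleGraph V) (o : V → ℕ) : Type :=
  PresentedGroup (graphProductRels Γ o)

instance {V : Type} (Γ : SimpleGraph V) (o : V → ℕ) : Group (GraphProduct Γ o) :=
  inferInstanceAs (Group (PresentedGroup (graphProductRels Γ o)))

/-- The Cayley graph of the graph product `G(Γ)` with respect to the standard generators. -/
def cayleyGraphGP {V : Type} (Γ : SimpleGraph V) (o : V → ℕ) : SimpleGraph (GraphProduct Γ o) :=
  cayleyGraph (GraphProduct Γ o) (Set.range (PresentedGroup.of : V → GraphProduct Γ o))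

/-- The cycle graph `C_k` on `ZMod k` (`k ≥ 3`). -/
def cycleG (k : ℕ) : SimpleGraph (ZMod k) :=
  SimpleGraph.fromRel (fun i j => j = i + 1)

/-- A group is finitely presented. -/
def IsFinitelyPresented (G : Type) [Group G] : Prop :=
  ∃ (n : ℕ) (rels : Set (FreeGroup (Fin n))), rels.Finite ∧ Nonempty (G ≃* PresentedGroup rels)

/-
Take branch vertices (0,0), (1,1), (2,2) and (0,1), (1,2), (2,0). Each of the nine connecting
paths is an "L" made of a vertical and a horizontal segment; four of them are single edges and
four wind once around the torus along a row or column through a coordinate 2. The paths are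
internally disjoint because each vertex that is not a branch vertex is owned by at most one
path (ownership is a function of the vertex), and every path visits only its endpoints and
vertices it owns. Distinctness of 0, 1, 2 in both factors is where n, m ≥ 3 enters.
-/

open SimpleGraph

theorem containsSubdivision_of_owner {V W : Type} {G : SimpleGraph V} {H : SimpleGraph W}
    (f : W ↪ V) (p : ∀ {a b : W}, H.Adj a b → G.Walk (f a) (f b))
    (hpath : ∀ {a b : W} (h : H.Adj a b), (p h).IsPath)
    (hsymm : ∀ {a b : W} (h : H.Adj a b), p h.symm = (p h).reverse)
    (owner : V → Option (Sym2 W)) (hbranch : ∀ c, owner (f c) = none)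
    (hsupp : ∀ {a b : W} (h : H.Adj a b), ∀ x ∈ (p h).support,
      x = f a ∨ x = f b ∨ owner x = some s(a, b)) :
    ContainsSubdivision G H := by
  refine ⟨f, p, hpath, hsymm, fun h c hc => ?_, fun h₁ h₂ hne x hx₁ hx₂ => ?_⟩
  · rcases hsupp h _ hc with hca | hcb | hc
    · exact .inl (f.injective hca)
    · exact .inr (f.injective hcb)
    · simp [hbranch] at hc
  · rcases hsupp h₁ x hx₁ with rfl | rfl | hx₁ <;> try exact ⟨_, rfl⟩
    rcases hsupp h₂ x hx₂ with rfl | rfl | hx₂ <;> try exact ⟨_, rfl⟩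
    exact absurd (Option.some_injective _ (hx₁.symm.trans hx₂)) hne

section Bipartite

variable {α β V : Type} {G : SimpleGraph V} {f : α ⊕ β ↪ V}

def bipartiteWalk (w : ∀ i j, G.Walk (f (.inl i)) (f (.inr j))) :
    ∀ {a b : α ⊕ β}, (completeBipartiteGraph α β).Adj a b → G.Walk (f a) (f b)
  | .inl i, .inr j, _ => w i j
  | .inr j, .inl i, _ => (w i j).reverse
  | .inl _, .inl _, h => absurd h (by simp)
  | .inr _, .inr _, h => absurd h (by simp)

theorem containsSubdivision_completeBipartiteGraph_of_owner
    (w : ∀ i j, G.Walk (f (.inl i)) (f (.inr j))) (hpath : ∀ i j, (w i j).IsPath)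
    (owner : V → Option (α × β)) (hbranch : ∀ c, owner (f c) = none)
    (hsupp : ∀ i j, ∀ x ∈ (w i j).support,
      x = f (.inl i) ∨ x = f (.inr j) ∨ owner x = some (i, j)) :
    ContainsSubdivision G (completeBipartiteGraph α β) := by
  refine containsSubdivision_of_owner f (bipartiteWalk w) ?_ ?_
    (fun x => (owner x).map fun e => s(.inl e.1, .inr e.2)) (by simp [hbranch]) ?_
  · rintro (i | j) (i' | j') h <;> simp at h
    exacts [hpath i j', (hpath i' j).reverse]
  · rintro (i | j) (i' | j') h <;> simp at h
    exacts [rfl, (Walk.reverse_reverse _).symm]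
  · rintro (i | j) (i' | j') h x hx <;> simp at h
    · rcases hsupp i j' x hx with h | h | h <;> simp [h]
    · rw [bipartiteWalk, Walk.support_reverse, List.mem_reverse] at hx
      rcases hsupp i' j x hx with h | h | h <;> simp [h, Sym2.eq_swap]

end Bipartite

lemma SimpleGraph.Walk.IsPath.append {V : Type*} {G : SimpleGraph V} {u v w : V}
    {p : G.Walk u v} {q : G.Walk v w} (hp : p.IsPath) (hq : q.IsPath)
    (h : ∀ x ∈ p.support, x ∈ q.support → x = v) : (p.append q).IsPath := by
  rw [Walk.isPath_def, Walk.support_append, List.nodup_append]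
  refine ⟨hp.support_nodup, hq.support_nodup.sublist (List.tail_sublist _), ?_⟩
  rintro x hx _ hy rfl
  obtain rfl := h x hx (List.mem_of_mem_tail hy)
  have hq' := hq.support_nodup
  rw [← Walk.cons_tail_support] at hq'
  exact (List.nodup_cons.1 hq').1 hy

section StraightWalk

variable {A : Type} [AddGroup A] {S : Set A} {s : A}

lemma cayleyGraphAdd_adj_add (hs : s ∈ S) (hs0 : s ≠ 0) (g : A) :
    (cayleyGraphAdd A S).Adj g (g + s) :=
  (fromRel_adj _ _ _).2 ⟨by simpa using hs0, Or.inl ⟨s, hs, rfl⟩⟩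

def straightWalk (hs : s ∈ S) (hs0 : s ≠ 0) (g : A) :
    (k : ℕ) → (cayleyGraphAdd A S).Walk g (g + k • s)
  | 0 => Walk.nil.copy rfl (by simp)
  | k + 1 => ((straightWalk hs hs0 g k).concat (cayleyGraphAdd_adj_add hs hs0 _)).copy rfl
      (by rw [succ_nsmul, add_assoc])

variable (hs : s ∈ S) (hs0 : s ≠ 0) (g : A)

lemma support_straightWalk (k : ℕ) :
    (straightWalk hs hs0 g k).support = (List.range (k + 1)).map (fun t => g + t • s) := by
  induction k with
  | zero => simp [straightWalk]
  | succ k ih =>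
    rw [straightWalk, Walk.support_copy, Walk.support_concat, ih, List.range_succ (n := k + 1),
      List.map_append, List.map_singleton, succ_nsmul, add_assoc]

lemma mem_support_straightWalk {k : ℕ} {x : A} :
    x ∈ (straightWalk hs hs0 g k).support ↔ ∃ t ≤ k, x = g + t • s := by
  simp [support_straightWalk, eq_comm]

lemma isPath_straightWalk {k : ℕ} (hk : k < addOrderOf s) :
    (straightWalk hs hs0 g k).IsPath := by
  rw [Walk.isPath_def, support_straightWalk]
  refine List.Nodup.map_on (fun a ha b hb hab => ?_) List.nodup_range
  simp only [List.mem_range] at ha hb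
  exact nsmul_injOn_Iio_addOrderOf (Set.mem_Iio.2 (by omega)) (Set.mem_Iio.2 (by omega))
    (add_left_cancel hab)

end StraightWalk

lemma ZMod.zero_one_two_pairwise_ne {n : ℕ} (hn : 3 ≤ n) :
    (0 : ZMod n) ≠ 1 ∧ (0 : ZMod n) ≠ 2 ∧ (1 : ZMod n) ≠ 2 := by
  have h (a b : ℕ) (ha : a < b) (hb : b < 3) : (a : ZMod n) ≠ b := by
    rw [Ne, ZMod.natCast_eq_natCast_iff', Nat.mod_eq_of_lt (by omega),
      Nat.mod_eq_of_lt (by omega)]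
    omega
  exact ⟨by simpa using h 0 1, by simpa using h 0 2, by simpa using h 1 2⟩

lemma ZMod.two_add_natCast_sub_two {n : ℕ} [Fact (1 < n)] : (2 : ZMod n) + (n - 2 : ℕ) = 0 := by
  rw [Nat.cast_sub (Fact.out : 1 < n), ZMod.natCast_self]
  ring

lemma ZMod.exists_natCast_le_sub_two_iff {n : ℕ} [Fact (1 < n)] (c y : ZMod n) :
    (∃ t ≤ n - 2, y = c + t) ↔ y ≠ c - 1 := by
  have hn : 1 < n := Fact.out
  constructor
  · rintro ⟨t, ht, rfl⟩ h
    have : ((t + 1 : ℕ) : ZMod n) = 0 := by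
      push_cast
      linear_combination h
    rw [ZMod.natCast_eq_zero_iff] at this
    exact absurd (Nat.le_of_dvd (by omega) this) (by omega)
  · intro h
    refine ⟨(y - c).val, ?_, by simp⟩
    have hval : (y - c).val ≠ n - 1 := fun hv => h <| by
      have := ZMod.natCast_zmod_val (y - c)
      rw [hv, Nat.cast_sub hn.le, ZMod.natCast_self] at this
      linear_combination -this
    have := (y - c).val_lt
    omega

section Torus

variable {n m : ℕ}

abbrev torusGraph (n m : ℕ) : SimpleGraph (ZMod n × ZMod m) :=
  cayleyGraphAdd (ZMod n × ZMod m) {(1, 0), (0, 1)}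

def horizontalWalk [Fact (1 < n)] (g : ZMod n × ZMod m) (k : ℕ) :
    (torusGraph n m).Walk g (g + k • (1, 0)) :=
  straightWalk (by simp) (by simp) g k

def verticalWalk [Fact (1 < m)] (g : ZMod n × ZMod m) (k : ℕ) :
    (torusGraph n m).Walk g (g + k • (0, 1)) :=
  straightWalk (by simp) (by simp) g k

lemma mem_support_horizontalWalk [Fact (1 < n)] {g x : ZMod n × ZMod m} {k : ℕ} :
    x ∈ (horizontalWalk g k).support ↔ x.2 = g.2 ∧ ∃ t ≤ k, x.1 = g.1 + t := by
  simp only [horizontalWalk, mem_support_straightWalk, Prod.ext_iff]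
  aesop

lemma mem_support_verticalWalk [Fact (1 < m)] {g x : ZMod n × ZMod m} {k : ℕ} :
    x ∈ (verticalWalk g k).support ↔ x.1 = g.1 ∧ ∃ t ≤ k, x.2 = g.2 + t := by
  simp only [verticalWalk, mem_support_straightWalk, Prod.ext_iff]
  aesop

lemma isPath_horizontalWalk [Fact (1 < n)] (g : ZMod n × ZMod m) {k : ℕ} (hk : k < n) :
    (horizontalWalk g k).IsPath :=
  isPath_straightWalk _ _ g (by simpa [Prod.addOrderOf_mk] using hk)

lemma isPath_verticalWalk [Fact (1 < m)] (g : ZMod n × ZMod m) {k : ℕ} (hk : k < m) :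
    (verticalWalk g k).IsPath :=
  isPath_straightWalk _ _ g (by simpa [Prod.addOrderOf_mk] using hk)

variable [Fact (1 < n)] [Fact (1 < m)]

def cornerWalk (c : ZMod n × ZMod m) (kv kh : ℕ) :
    (torusGraph n m).Walk (c + kv • (0, 1)) (c + kh • (1, 0)) :=
  (verticalWalk c kv).reverse.append (horizontalWalk c kh)

lemma mem_support_cornerWalk {c x : ZMod n × ZMod m} {kv kh : ℕ} :
    x ∈ (cornerWalk c kv kh).support ↔
      (x.1 = c.1 ∧ ∃ t ≤ kv, x.2 = c.2 + t) ∨ (x.2 = c.2 ∧ ∃ t ≤ kh, x.1 = c.1 + t) := by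
  rw [cornerWalk, Walk.mem_support_append_iff, Walk.support_reverse, List.mem_reverse,
    mem_support_verticalWalk, mem_support_horizontalWalk]

lemma isPath_cornerWalk (c : ZMod n × ZMod m) {kv kh : ℕ} (hkv : kv < m) (hkh : kh < n) :
    (cornerWalk c kv kh).IsPath := by
  refine (isPath_verticalWalk c hkv).reverse.append (isPath_horizontalWalk c hkh) ?_
  intro x hv hh
  rw [Walk.support_reverse, List.mem_reverse, mem_support_verticalWalk] at hv
  rw [mem_support_horizontalWalk] at hh
  exact Prod.ext hv.1 hh.1

end Torus

namespace TorusK33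

variable {n m : ℕ}

-- Irreducible, so that the endpoint proofs in `walk` keep their types `_ = left i`;
-- otherwise `Walk.isPath_copy` fails to rewrite the walks.
@[irreducible] def left : Fin 3 → ZMod n × ZMod m
  | 0 => (0, 0)
  | 1 => (1, 1)
  | 2 => (2, 2)

@[irreducible] def right : Fin 3 → ZMod n × ZMod m
  | 0 => (0, 1)
  | 1 => (1, 2)
  | 2 => (2, 0)

-- The five regions are the interiors of the five walks that are not single edges.
def owner (x : ZMod n × ZMod m) : Option (Fin 3 × Fin 3) :=
  if x.1 = 2 ∧ x.2 ≠ 0 ∧ x.2 ≠ 1 ∧ x.2 ≠ 2 then some (2, 2)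
  else if x.2 = 0 ∧ x.1 ≠ 0 ∧ x.1 ≠ 1 ∧ x.1 ≠ 2 then some (0, 2)
  else if x.1 = 0 ∧ x.2 ≠ 0 ∧ x.2 ≠ 1 then some (0, 1)
  else if x = (1, 0) then some (1, 2)
  else if x.2 = 1 ∧ x.1 ≠ 0 ∧ x.1 ≠ 1 then some (2, 0)
  else none

lemma injective_branch (hn : 3 ≤ n) (hm : 3 ≤ m) :
    Function.Injective (Sum.elim left right : Fin 3 ⊕ Fin 3 → ZMod n × ZMod m) := by
  obtain ⟨_, _, _⟩ := ZMod.zero_one_two_pairwise_ne hn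
  obtain ⟨_, _, _⟩ := ZMod.zero_one_two_pairwise_ne hm
  refine Sum.elim_injective.2 ⟨fun i j h => ?_, fun i j h => ?_, fun i j => ?_⟩ <;>
    fin_cases i <;> fin_cases j <;> simp_all [left, right, eq_comm]

lemma owner_branch (hn : 3 ≤ n) (hm : 3 ≤ m) (c : Fin 3 ⊕ Fin 3) :
    owner (Sum.elim left right c : ZMod n × ZMod m) = none := by
  obtain ⟨_, _, _⟩ := ZMod.zero_one_two_pairwise_ne hn
  obtain ⟨_, _, _⟩ := ZMod.zero_one_two_pairwise_ne hm
  rcases c with i | i <;> fin_cases i <;> simp [owner, left, right] <;> grind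

variable [Fact (1 < n)] [Fact (1 < m)]

def walk : ∀ i j : Fin 3, (torusGraph n m).Walk (left i) (right j)
  | 0, 0 => (cornerWalk (0, 0) 1 0).reverse.copy (by norm_num [left]) (by norm_num [right])
  | 0, 1 => (cornerWalk (0, 2) (m - 2) 1).copy
      (by norm_num [left, ZMod.two_add_natCast_sub_two]) (by norm_num [right])
  | 0, 2 => (cornerWalk (2, 0) 0 (n - 2)).reverse.copy
      (by norm_num [left, ZMod.two_add_natCast_sub_two]) (by norm_num [right])
  | 1, 0 => (cornerWalk (0, 1) 0 1).reverse.copy (by norm_num [left]) (by norm_num [right])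
  | 1, 1 => (cornerWalk (1, 1) 1 0).reverse.copy (by norm_num [left]) (by norm_num [right])
  | 1, 2 => (cornerWalk (1, 0) 1 1).copy (by norm_num [left]) (by norm_num [right])
  | 2, 0 => (cornerWalk (2, 1) 1 (n - 2)).copy
      (by norm_num [left]) (by norm_num [right, ZMod.two_add_natCast_sub_two])
  | 2, 1 => (cornerWalk (1, 2) 0 1).reverse.copy (by norm_num [left]) (by norm_num [right])
  | 2, 2 => (cornerWalk (2, 2) (m - 2) 0).reverse.copy
      (by norm_num [left]) (by norm_num [right, ZMod.two_add_natCast_sub_two])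

lemma isPath_walk (i j : Fin 3) : (walk (n := n) (m := m) i j).IsPath := by
  have : 1 < n := Fact.out
  have : 1 < m := Fact.out
  fin_cases i <;> fin_cases j <;>
    simp only [walk, Walk.isPath_copy, Walk.isPath_reverse_iff] <;>
    apply isPath_cornerWalk <;> omega

lemma mem_support_walk (hn : 3 ≤ n) (hm : 3 ≤ m) (i j : Fin 3) :
    ∀ x ∈ (walk (n := n) (m := m) i j).support,
      x = left i ∨ x = right j ∨ owner x = some (i, j) := by
  obtain ⟨_, _, _⟩ := ZMod.zero_one_two_pairwise_ne hn
  obtain ⟨_, _, _⟩ := ZMod.zero_one_two_pairwise_ne hm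
  rintro ⟨x, y⟩ hx
  fin_cases i <;> fin_cases j <;>
    simp [walk, mem_support_cornerWalk, ZMod.exists_natCast_le_sub_two_iff,
      Nat.le_one_iff_eq_zero_or_eq_one, or_and_right, exists_or, one_add_one_eq_two] at hx <;>
    simp [left, right, owner] <;> grind

end TorusK33

/-- The Cayley graph of `ℤ/n × ℤ/m` (`n, m ≥ 3`) with respect to `{(1,0), (0,1)}` contains a
subdivision of `K₃,₃` as a subgraph. -/
theorem stmt_0 (n m : ℕ) (hn : 3 ≤ n) (hm : 3 ≤ m) :
    ContainsSubdivision
      (cayleyGraphAdd (ZMod n × ZMod m) {(1, 0), (0, 1)})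
      (completeBipartiteGraph (Fin 3) (Fin 3)) := by
  have : Fact (1 < n) := ⟨by omega⟩
  have : Fact (1 < m) := ⟨by omega⟩
  exact containsSubdivision_completeBipartiteGraph_of_owner
    (f := ⟨_, TorusK33.injective_branch hn hm⟩) TorusK33.walk TorusK33.isPath_walk
    TorusK33.owner (TorusK33.owner_branch hn hm) (TorusK33.mem_support_walk hn hm)
end

section
/- Let G = ⟨a, b, v | a² = b² = vⁿ = 1, [a,v] = [b,v] = [a,b] = 1⟩ ≅ ℤ/2 × ℤ/2 × ℤ/n with n ≥ 3 (graph product over a triangle). Then the Cayley graph of G with generating set {a, b, v} contains a subdivision of K_{3,3}, hence is non-planar. -/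
open scoped commutatorElement

/-!
The Cayley graph is the box product `C₂ □ (C₂ □ Cₙ)` of cycles, a `4 × n` torus grid.
Containing a subdivision is transitive and compatible with box products, and `Cₙ` contains a
subdivision of `C₃`; so it suffices to find a subdivision of `K₃,₃` in the twelve-vertex graph
`C₂ □ (C₂ □ C₃)`, which is a finite check.
-/

open SimpleGraph

theorem cycleG_adj {k : ℕ} {a b : ZMod k} :
    (cycleG k).Adj a b ↔ a ≠ b ∧ (b = a + 1 ∨ a = b + 1) :=
  fromRel_adj _ _ _

theorem cayleyGraphAdd_prod {A B : Type} [AddGroup A] [AddGroup B] (S : Set A) (T : Set B) :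
    cayleyGraphAdd (A × B) ((fun s => (s, 0)) '' S ∪ (fun t => (0, t)) '' T) =
      cayleyGraphAdd A S □ cayleyGraphAdd B T := by
  ext ⟨a, b⟩ ⟨a', b'⟩
  simp only [cayleyGraphAdd, fromRel_adj, boxProd_adj, Set.mem_union, Set.mem_image, Prod.exists,
    Prod.mk_add_mk, Prod.mk.injEq, exists_or, and_or_left, or_and_right, ne_eq]
  grind

theorem cayleyGraphAdd_zmod_one (n : ℕ) : cayleyGraphAdd (ZMod n) {1} = cycleG n := by
  ext a b
  simp [cayleyGraphAdd, cycleG, fromRel_adj]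

theorem cayleyGraphAdd_zmod2_zmod2_zmod (n : ℕ) :
    cayleyGraphAdd (ZMod 2 × ZMod 2 × ZMod n) {(1, 0, 0), (0, 1, 0), (0, 0, 1)} =
      cycleG 2 □ (cycleG 2 □ cycleG n) := by
  rw [← cayleyGraphAdd_zmod_one, ← cayleyGraphAdd_zmod_one, ← cayleyGraphAdd_prod,
    ← cayleyGraphAdd_prod]
  congr 1
  ext ⟨x, y, z⟩
  simp only [Set.image_singleton, Set.union_singleton, Set.singleton_union, Set.mem_insert_iff,
    Set.mem_singleton_iff, Prod.mk.injEq, Prod.mk_eq_zero]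
  grind

namespace SimpleGraph.Walk

variable {U V : Type*} {G : SimpleGraph V} {K : SimpleGraph U} (f : U → V)
  (q : ∀ {a b : U}, K.Adj a b → G.Walk (f a) (f b))

def bind : ∀ {u v : U}, K.Walk u v → G.Walk (f u) (f v)
  | _, _, nil => nil
  | _, _, cons h p => (q h).append (p.bind)

variable {f q}

@[simp] theorem bind_nil {u : U} : (nil : K.Walk u u).bind f q = nil := rfl

@[simp] theorem bind_cons {u v w : U} (h : K.Adj u v) (p : K.Walk v w) :
    (cons h p).bind f q = (q h).append (p.bind f q) := rfl

theorem bind_append {u v w : U} (p : K.Walk u v) (p' : K.Walk v w) :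
    (p.append p').bind f q = (p.bind f q).append (p'.bind f q) := by
  induction p with
  | nil => rfl
  | cons h p ih => simp [ih, append_assoc]

theorem bind_reverse (hq : ∀ {a b : U} (h : K.Adj a b), q h.symm = (q h).reverse)
    {u v : U} (p : K.Walk u v) : p.reverse.bind f q = (p.bind f q).reverse := by
  induction p with
  | nil => rfl
  | cons h p ih => simp [bind_append, ih, ← hq]

theorem mem_support_bind_iff {u v : U} (p : K.Walk u v) {x : V} :
    x ∈ (p.bind f q).support ↔ x = f u ∨ ∃ d ∈ p.darts, x ∈ (q d.adj).support := by
  induction p with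
  | nil => simp
  | cons h p ih =>
    simp only [bind_cons, mem_support_append_iff, ih, darts_cons, List.mem_cons,
      exists_eq_or_imp]
    have := (q h).start_mem_support
    have := (q h).end_mem_support
    grind

theorem map_mem_support_bind_iff (hf : Function.Injective f)
    (hbranch : ∀ {a b : U} (h : K.Adj a b) (c : U), f c ∈ (q h).support → c = a ∨ c = b)
    {u v : U} (p : K.Walk u v) {c : U} :
    f c ∈ (p.bind f q).support ↔ c ∈ p.support := by
  rw [mem_support_bind_iff, hf.eq_iff]
  constructor
  · rintro (rfl | ⟨d, hd, hc⟩)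
    · exact p.start_mem_support
    · rcases hbranch d.adj c hc with rfl | rfl
      · exact p.dart_fst_mem_support_of_mem_darts hd
      · exact p.dart_snd_mem_support_of_mem_darts hd
  · intro hc
    rcases (mem_support_iff p).1 hc with rfl | hc
    · exact Or.inl rfl
    · rw [← map_snd_darts, List.mem_map] at hc
      obtain ⟨d, hd, rfl⟩ := hc
      exact Or.inr ⟨d, hd, end_mem_support _⟩

theorem IsPath.append_of_inter {u v w : V} {p : G.Walk u v} {p' : G.Walk v w} (hp : p.IsPath)
    (hp' : p'.IsPath) (hinter : ∀ x ∈ p.support, x ∈ p'.support → x = v) :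
    (p.append p').IsPath := by
  rw [isPath_def, support_append, List.nodup_append]
  rw [isPath_def, ← cons_tail_support, List.nodup_cons] at hp'
  refine ⟨hp.support_nodup, hp'.2, fun x hx y hy hxy => ?_⟩
  subst hxy
  exact hp'.1 (hinter x hx (List.mem_of_mem_tail hy) ▸ hy)

theorem IsPath.bind (hf : Function.Injective f) (hq : ∀ {a b : U} (h : K.Adj a b), (q h).IsPath)
    (hbranch : ∀ {a b : U} (h : K.Adj a b) (c : U), f c ∈ (q h).support → c = a ∨ c = b)
    (hinter : ∀ {a b c d : U} (h₁ : K.Adj a b) (h₂ : K.Adj c d), s(a, b) ≠ s(c, d) →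
      ∀ x, x ∈ (q h₁).support → x ∈ (q h₂).support → ∃ w, x = f w)
    {u v : U} {p : K.Walk u v} (hp : p.IsPath) : (p.bind f q).IsPath := by
  induction p with
  | nil => exact IsPath.nil
  | @cons u v w h p ih =>
    rw [cons_isPath_iff] at hp
    refine (hq h).append_of_inter (ih hp.1) fun x hx hx' => ?_
    rcases (mem_support_bind_iff p).1 hx' with rfl | ⟨d, hd, hxd⟩
    · rfl
    have hne : s(u, v) ≠ s(d.fst, d.snd) := by
      intro he
      have hu : u ∈ s(d.fst, d.snd) := he ▸ Sym2.mem_mk_left u v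
      rcases Sym2.mem_iff.1 hu with rfl | rfl
      · exact hp.2 (p.dart_fst_mem_support_of_mem_darts hd)
      · exact hp.2 (p.dart_snd_mem_support_of_mem_darts hd)
    obtain ⟨c, rfl⟩ := hinter h d.adj hne x hx hxd
    rcases hbranch h c hx with rfl | rfl
    · exact absurd ((map_mem_support_bind_iff hf hbranch p).1 hx') hp.2
    · rfl

end SimpleGraph.Walk

/-- If the paths of two edges of `H` share an edge `e`, both ends of `e` are branch vertices
lying on both paths, so the two edges of `H` coincide. -/
theorem eq_of_mem_edges_of_mem_edges {U W : Type} {K : SimpleGraph U} {H : SimpleGraph W}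
    {f : W → U} {p : ∀ {a b : W}, H.Adj a b → K.Walk (f a) (f b)}
    (hp_branch : ∀ {a b : W} (h : H.Adj a b) (c : W), f c ∈ (p h).support → c = a ∨ c = b)
    (hp_inter : ∀ {a b c d : W} (h₁ : H.Adj a b) (h₂ : H.Adj c d), s(a, b) ≠ s(c, d) →
      ∀ x, x ∈ (p h₁).support → x ∈ (p h₂).support → ∃ w, x = f w)
    {a b c d : W} (h₁ : H.Adj a b) (h₂ : H.Adj c d) {e : Sym2 U} (he₁ : e ∈ (p h₁).edges)
    (he₂ : e ∈ (p h₂).edges) : s(a, b) = s(c, d) := by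
  by_contra hne
  induction e using Sym2.ind with | _ y y' => ?_
  have branch_of_mem {z : U} (hz₁ : z ∈ (p h₁).support) (hz₂ : z ∈ (p h₂).support) :
      ∃ w, z = f w ∧ w ∈ s(a, b) ∧ w ∈ s(c, d) := by
    obtain ⟨w, rfl⟩ := hp_inter h₁ h₂ hne z hz₁ hz₂
    exact ⟨w, rfl, Sym2.mem_iff.2 (hp_branch h₁ w hz₁), Sym2.mem_iff.2 (hp_branch h₂ w hz₂)⟩
  obtain ⟨w, rfl, hwab, hwcd⟩ := branch_of_mem (Walk.fst_mem_support_of_mem_edges _ he₁)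
    (Walk.fst_mem_support_of_mem_edges _ he₂)
  obtain ⟨w', rfl, hw'ab, hw'cd⟩ := branch_of_mem (Walk.snd_mem_support_of_mem_edges _ he₁)
    (Walk.snd_mem_support_of_mem_edges _ he₂)
  have hww' : w ≠ w' := fun h => (Walk.adj_of_mem_edges _ he₁).ne (by rw [h])
  exact hne (Sym2.eq_of_ne_mem hww' hwab hw'ab hwcd hw'cd)

open SimpleGraph.Walk in
theorem ContainsSubdivision.trans {U V W : Type} {G : SimpleGraph V} {K : SimpleGraph U}
    {H : SimpleGraph W} (hGK : ContainsSubdivision G K) (hKH : ContainsSubdivision K H) :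
    ContainsSubdivision G H := by
  obtain ⟨g, q, hq, hq_symm, hq_branch, hq_inter⟩ := hGK
  obtain ⟨f, p, hp, hp_symm, hp_branch, hp_inter⟩ := hKH
  have mem_bind {a b : W} (h : H.Adj a b) (y : U) :
      g y ∈ ((p h).bind g q).support ↔ y ∈ (p h).support :=
    map_mem_support_bind_iff g.injective hq_branch (p h)
  refine ⟨f.trans g, fun h => (p h).bind g q,
    fun h => (hp h).bind g.injective hq hq_branch hq_inter,
    fun h => show (p h.symm).bind g q = _ by rw [hp_symm h, bind_reverse hq_symm]; rfl,
    fun h c hc => hp_branch h c ((mem_bind h _).1 hc), ?_⟩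
  intro a b c d h₁ h₂ hne x hx₁ hx₂
  by_cases hx : ∃ y, x = g y
  · obtain ⟨y, rfl⟩ := hx
    obtain ⟨w, rfl⟩ := hp_inter h₁ h₂ hne y ((mem_bind h₁ y).1 hx₁) ((mem_bind h₂ y).1 hx₂)
    exact ⟨w, rfl⟩
  simp only [not_exists] at hx
  obtain ⟨d₁, hd₁, hx₁⟩ := ((mem_support_bind_iff _).1 hx₁).resolve_left (hx _)
  obtain ⟨d₂, hd₂, hx₂⟩ := ((mem_support_bind_iff _).1 hx₂).resolve_left (hx _)
  have hedge : d₁.edge = d₂.edge := by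
    by_contra hne'
    obtain ⟨w, rfl⟩ := hq_inter d₁.adj d₂.adj hne' x hx₁ hx₂
    exact hx w rfl
  exact (hne (eq_of_mem_edges_of_mem_edges hp_branch hp_inter h₁ h₂
    (List.mem_map_of_mem hd₁) (hedge ▸ List.mem_map_of_mem hd₂))).elim

theorem ContainsSubdivision.of_orientation {V W : Type} {G : SimpleGraph V} {H : SimpleGraph W}
    (r : W → W → Prop) (hr : ∀ {a b : W}, H.Adj a b → (r a b ↔ ¬ r b a)) (f : W ↪ V)
    (q : ∀ {a b : W}, H.Adj a b → r a b → G.Walk (f a) (f b))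
    (hq : ∀ {a b : W} (h : H.Adj a b) (hab : r a b), (q h hab).IsPath)
    (hq_branch : ∀ {a b : W} (h : H.Adj a b) (hab : r a b) (c : W),
      f c ∈ (q h hab).support → c = a ∨ c = b)
    (hq_inter : ∀ {a b c d : W} (h₁ : H.Adj a b) (h₂ : H.Adj c d) (hab : r a b) (hcd : r c d),
      s(a, b) ≠ s(c, d) → ∀ x, x ∈ (q h₁ hab).support → x ∈ (q h₂ hcd).support → ∃ w, x = f w) :
    ContainsSubdivision G H := by
  classical
  let p {a b : W} (h : H.Adj a b) : G.Walk (f a) (f b) :=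
    if hab : r a b then q h hab else (q h.symm ((hr h.symm).2 hab)).reverse
  have oriented {a b : W} (h : H.Adj a b) : ∃ (a' b' : W) (h' : H.Adj a' b') (hab' : r a' b'),
      s(a, b) = s(a', b') ∧ ((p h).IsPath ↔ (q h' hab').IsPath) ∧
      ∀ x, x ∈ (p h).support ↔ x ∈ (q h' hab').support := by
    by_cases hab : r a b
    · exact ⟨a, b, h, hab, rfl, by simp [p, hab]⟩
    · exact ⟨b, a, h.symm, (hr h.symm).2 hab, Sym2.eq_swap, by simp [p, hab]⟩
  refine ⟨f, p, fun h => ?_, fun {a b} h => ?_, fun h c hc => ?_, fun h₁ h₂ hne x hx₁ hx₂ => ?_⟩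
  · obtain ⟨a', b', h', hab', -, hpath, -⟩ := oriented h
    exact hpath.2 (hq h' hab')
  · by_cases hab : r a b
    · simp [p, hab, (hr h).1 hab]
    · simp [p, hab, (hr h.symm).2 hab]
  · obtain ⟨a', b', h', hab', he, -, hmem⟩ := oriented h
    have hc' : c ∈ s(a', b') := Sym2.mem_iff.2 (hq_branch h' hab' c ((hmem _).1 hc))
    exact Sym2.mem_iff.1 (he ▸ hc')
  · obtain ⟨a', b', h₁', hab', he₁, -, hmem₁⟩ := oriented h₁
    obtain ⟨c', d', h₂', hcd', he₂, -, hmem₂⟩ := oriented h₂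
    exact hq_inter h₁' h₂' hab' hcd' (he₁ ▸ he₂ ▸ hne) x ((hmem₁ x).1 hx₁) ((hmem₂ x).1 hx₂)

namespace SimpleGraph

variable {X V W : Type} {K : SimpleGraph X} {G : SimpleGraph V} {H : SimpleGraph W}

theorem boxProd_adj_snd_of_fst_eq {a b : X × W} (h : (K □ H).Adj a b) (hk : a.1 = b.1) :
    H.Adj a.2 b.2 :=
  (h.resolve_left fun h' => K.loopless.irrefl _ (hk ▸ h'.1)).1

theorem boxProd_adj_fst_of_fst_ne {a b : X × W} (h : (K □ H).Adj a b) (hk : a.1 ≠ b.1) :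
    K.Adj a.1 b.1 ∧ a.2 = b.2 :=
  h.resolve_right fun h' => hk h'.2

variable (K) [DecidableEq X] {f : W → V} (p : ∀ {a b : W}, H.Adj a b → G.Walk (f a) (f b))

def boxProdWalk {a b : X × W} (h : (K □ H).Adj a b) : (K □ G).Walk (a.1, f a.2) (b.1, f b.2) :=
  if hk : a.1 = b.1 then
    ((p (boxProd_adj_snd_of_fst_eq h hk)).boxProdRight K a.1).copy rfl (by rw [hk])
  else
    (show (K □ G).Adj (a.1, f a.2) (b.1, f b.2) from
      .inl ⟨(boxProd_adj_fst_of_fst_ne h hk).1, by rw [(boxProd_adj_fst_of_fst_ne h hk).2]⟩).toWalk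

variable {K p}

theorem support_boxProdWalk_of_fst_eq {a b : X × W} (h : (K □ H).Adj a b) (hk : a.1 = b.1) :
    (boxProdWalk K p h).support = (p (boxProd_adj_snd_of_fst_eq h hk)).support.map (a.1, ·) := by
  rw [boxProdWalk, dif_pos hk, Walk.support_copy]
  exact Walk.support_map _ _

theorem support_boxProdWalk_of_fst_ne {a b : X × W} (h : (K □ H).Adj a b) (hk : a.1 ≠ b.1) :
    (boxProdWalk K p h).support = [(a.1, f a.2), (b.1, f b.2)] := by
  simp [boxProdWalk, hk]

theorem boxProdWalk_symm (hp_symm : ∀ {a b : W} (h : H.Adj a b), p h.symm = (p h).reverse)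
    {a b : X × W} (h : (K □ H).Adj a b) :
    boxProdWalk K p h.symm = (boxProdWalk K p h).reverse := by
  obtain ⟨k, w⟩ := a
  obtain ⟨k', w'⟩ := b
  by_cases hk : k = k'
  · subst hk
    have hsymm := hp_symm (boxProd_adj_snd_of_fst_eq h rfl)
    simp only [boxProdWalk, dif_pos, Walk.copy_rfl_rfl]
    exact (congrArg (Walk.map _) hsymm).trans (Walk.reverse_map _ _).symm
  · simp [boxProdWalk, hk, Ne.symm hk]

theorem isPath_boxProdWalk (hp : ∀ {a b : W} (h : H.Adj a b), (p h).IsPath) {a b : X × W}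
    (h : (K □ H).Adj a b) : (boxProdWalk K p h).IsPath := by
  rw [Walk.isPath_def]
  by_cases hk : a.1 = b.1
  · rw [support_boxProdWalk_of_fst_eq h hk]
    exact (hp _).support_nodup.map (Prod.mk_right_injective _)
  · simp [support_boxProdWalk_of_fst_ne h hk, hk]

theorem eq_or_eq_of_mem_support_boxProdWalk (hf : Function.Injective f)
    (hp_branch : ∀ {a b : W} (h : H.Adj a b) (c : W), f c ∈ (p h).support → c = a ∨ c = b)
    {a b c : X × W} (h : (K □ H).Adj a b) (hc : (c.1, f c.2) ∈ (boxProdWalk K p h).support) :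
    c = a ∨ c = b := by
  by_cases hk : a.1 = b.1
  · rw [support_boxProdWalk_of_fst_eq h hk, List.mem_map] at hc
    obtain ⟨y, hy, hyc⟩ := hc
    simp only [Prod.mk.injEq] at hyc
    obtain ⟨hca, rfl⟩ := hyc
    rcases hp_branch _ c.2 hy with hc | hc
    · exact .inl (Prod.ext hca.symm hc)
    · exact .inr (Prod.ext (hca.symm.trans hk) hc)
  · rw [support_boxProdWalk_of_fst_ne h hk] at hc
    simp only [List.mem_cons, Prod.mk.injEq, hf.eq_iff, List.not_mem_nil, or_false] at hc
    exact hc.imp (fun h => Prod.ext h.1 h.2) (fun h => Prod.ext h.1 h.2)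

theorem exists_eq_of_mem_support_boxProdWalk
    (hp_inter : ∀ {a b c d : W} (h₁ : H.Adj a b) (h₂ : H.Adj c d), s(a, b) ≠ s(c, d) →
      ∀ x, x ∈ (p h₁).support → x ∈ (p h₂).support → ∃ w, x = f w)
    {a b c d : X × W} (h₁ : (K □ H).Adj a b) (h₂ : (K □ H).Adj c d) (hne : s(a, b) ≠ s(c, d))
    {x : X × V} (hx₁ : x ∈ (boxProdWalk K p h₁).support) (hx₂ : x ∈ (boxProdWalk K p h₂).support) :
    ∃ w : X × W, x = (w.1, f w.2) := by
  by_cases hk₁ : a.1 = b.1; swap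
  · rw [support_boxProdWalk_of_fst_ne h₁ hk₁] at hx₁
    simp only [List.mem_cons, List.not_mem_nil, or_false] at hx₁
    rcases hx₁ with rfl | rfl
    exacts [⟨a, rfl⟩, ⟨b, rfl⟩]
  by_cases hk₂ : c.1 = d.1; swap
  · rw [support_boxProdWalk_of_fst_ne h₂ hk₂] at hx₂
    simp only [List.mem_cons, List.not_mem_nil, or_false] at hx₂
    rcases hx₂ with rfl | rfl
    exacts [⟨c, rfl⟩, ⟨d, rfl⟩]
  rw [support_boxProdWalk_of_fst_eq h₁ hk₁, List.mem_map] at hx₁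
  rw [support_boxProdWalk_of_fst_eq h₂ hk₂, List.mem_map] at hx₂
  obtain ⟨y, hy₁, rfl⟩ := hx₁
  obtain ⟨y', hy₂, hyy'⟩ := hx₂
  simp only [Prod.mk.injEq] at hyy'
  obtain ⟨hca, hyy'⟩ := hyy'
  subst hyy'
  have hne' : s(a.2, b.2) ≠ s(c.2, d.2) := by
    intro he
    apply hne
    have := congrArg (Sym2.map (Prod.mk a.1)) he
    simp only [Sym2.map_mk] at this
    rwa [show b = (a.1, b.2) from Prod.ext hk₁.symm rfl, show c = (a.1, c.2) from Prod.ext hca rfl,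
      show d = (a.1, d.2) from Prod.ext (hk₂.symm.trans hca) rfl]
  obtain ⟨w, hw⟩ := hp_inter _ _ hne' _ hy₁ hy₂
  exact ⟨(a.1, w), by rw [hw]⟩

end SimpleGraph

theorem ContainsSubdivision.boxProd_left {X V W : Type} {G : SimpleGraph V} {H : SimpleGraph W}
    (K : SimpleGraph X) (hGH : ContainsSubdivision G H) :
    ContainsSubdivision (K □ G) (K □ H) := by
  classical
  obtain ⟨f, p, hp, hp_symm, hp_branch, hp_inter⟩ := hGH
  exact ⟨(Function.Embedding.refl X).prodMap f, fun h => boxProdWalk K p h,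
    fun h => isPath_boxProdWalk hp h, fun h => boxProdWalk_symm hp_symm h,
    fun h _ hc => eq_or_eq_of_mem_support_boxProdWalk f.injective hp_branch h hc,
    fun h₁ h₂ hne _ hx₁ hx₂ => exists_eq_of_mem_support_boxProdWalk hp_inter h₁ h₂ hne hx₁ hx₂⟩

theorem ZMod.natCast_eq_natCast_iff_of_le {n i l : ℕ} (hi : i ≤ n) (hl : l ≤ n) :
    (i : ZMod n) = l ↔ i = l ∨ (i = 0 ∧ l = n) ∨ (i = n ∧ l = 0) := by
  rw [ZMod.natCast_eq_natCast_iff']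
  rcases hi.lt_or_eq with hi | rfl <;> rcases hl.lt_or_eq with hl | rfl <;>
    simp [Nat.mod_eq_of_lt, *] <;> omega

theorem ZMod.natCast_add_ne_natCast {n i d : ℕ} (hd : 0 < d) (hdn : d < n) :
    ((i + d : ℕ) : ZMod n) ≠ i := by
  rw [Nat.cast_add, Ne, add_eq_left, ZMod.natCast_eq_zero_iff]
  exact fun h => (Nat.le_of_dvd hd h).not_gt hdn

theorem ZMod.val_add_one_eq {m : ℕ} [NeZero m] (hm : m ≠ 1) (a : ZMod m) :
    (a + 1).val = if a.val + 1 = m then 0 else a.val + 1 := by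
  rw [ZMod.val_add, ZMod.val_one'' hm]
  split_ifs with h
  · rw [h, Nat.mod_self]
  · exact Nat.mod_eq_of_lt (by have := a.val_lt; omega)

section ZModEmbedding

variable {m n : ℕ} [NeZero m]

def ZMod.valEmbedding (hmn : m ≤ n) : ZMod m ↪ ZMod n where
  toFun a := (a.val : ZMod n)
  inj' a b h := by
    have := a.val_lt
    have := b.val_lt
    rw [← (ZMod.val_injective m).eq_iff]
    rcases (ZMod.natCast_eq_natCast_iff_of_le (by omega) (by omega)).1 h with h | h | h <;> omega

@[simp] theorem ZMod.valEmbedding_apply (hmn : m ≤ n) (a : ZMod m) :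
    ZMod.valEmbedding hmn a = (a.val : ZMod n) := rfl

end ZModEmbedding

namespace cycleG

variable {n : ℕ}

theorem adj_add_one (hn : n ≠ 1) (x : ZMod n) : (cycleG n).Adj x (x + 1) :=
  cycleG_adj.2 ⟨fun h => hn (ZMod.one_eq_zero_iff.1 (by simpa using h.symm)), .inl rfl⟩

def arc (hn : n ≠ 1) (i : ℕ) : (k : ℕ) → (cycleG n).Walk (i : ZMod n) ((i + k : ℕ) : ZMod n)
  | 0 => .nil
  | k + 1 => .cons (adj_add_one hn _) ((arc hn (i + 1) k).copy (Nat.cast_succ i)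
      (by rw [Nat.add_right_comm]; rfl))

theorem mem_support_arc (hn : n ≠ 1) {i k : ℕ} {x : ZMod n} :
    x ∈ (arc hn i k).support ↔ ∃ l, i ≤ l ∧ l ≤ i + k ∧ x = l := by
  induction k generalizing i with
  | zero =>
    simp only [arc, Walk.support_nil, List.mem_singleton, add_zero]
    exact ⟨fun h => ⟨i, le_rfl, le_rfl, h⟩, fun ⟨l, hl, hl', h⟩ => le_antisymm hl' hl ▸ h⟩
  | succ k ih =>
    simp only [arc, Walk.support_cons, Walk.support_copy, List.mem_cons, ih]
    constructor
    · rintro (rfl | ⟨l, hl, hl', rfl⟩)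
      · exact ⟨i, le_rfl, by omega, rfl⟩
      · exact ⟨l, by omega, by omega, rfl⟩
    · rintro ⟨l, hl, hl', rfl⟩
      rcases hl.eq_or_lt with rfl | hl
      · exact .inl rfl
      · exact .inr ⟨l, hl, by omega, rfl⟩

theorem isPath_arc (hn : n ≠ 1) {i k : ℕ} (hk : k < n) : (arc hn i k).IsPath := by
  induction k generalizing i with
  | zero => exact .nil
  | succ k ih =>
    refine (Walk.cons_isPath_iff _ _).2 ⟨(Walk.isPath_copy _ _ _).2 (ih (by omega)), ?_⟩
    rw [Walk.support_copy, mem_support_arc]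
    rintro ⟨l, hl, hl', he⟩
    have hne := ZMod.natCast_add_ne_natCast (n := n) (i := i) (d := l - i) (by omega) (by omega)
    rw [Nat.add_sub_cancel' (by omega)] at hne
    exact hne he.symm

variable {m : ℕ} [NeZero m]

/-- The length of the arc of `cycleG n` that replaces the edge from `a` to `a + 1` of
`cycleG m`; the arc from `m - 1` wraps around through `m, …, n - 1` to `0`. -/
def wrapLength (n : ℕ) (a : ZMod m) : ℕ := if a.val + 1 = m then n - a.val else 1

theorem wrapLength_cases (hmn : m ≤ n) (a : ZMod m) :
    (a.val + 1 = m ∧ a.val + wrapLength n a = n) ∨ (a.val + 1 < m ∧ wrapLength n a = 1) := by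
  have := a.val_lt
  unfold wrapLength
  split_ifs <;> omega

theorem natCast_val_add_wrapLength (hm : m ≠ 1) (hmn : m ≤ n) (a : ZMod m) :
    ((a.val + wrapLength n a : ℕ) : ZMod n) = ((a + 1).val : ZMod n) := by
  rw [ZMod.val_add_one_eq hm]
  rcases wrapLength_cases hmn a with ⟨h, h'⟩ | ⟨h, h'⟩
  · rw [h', if_pos h, ZMod.natCast_self, Nat.cast_zero]
  · rw [h', if_neg h.ne]

theorem eq_or_eq_of_mem_support_arc (hm : m ≠ 1) (hmn : m ≤ n) (hn : n ≠ 1) {a c : ZMod m}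
    (hc : (c.val : ZMod n) ∈ (arc hn a.val (wrapLength n a)).support) : c = a ∨ c = a + 1 := by
  obtain ⟨l, hl, hl', he⟩ := (mem_support_arc hn).1 hc
  have := c.val_lt
  rw [← (ZMod.val_injective m).eq_iff, ← (ZMod.val_injective m).eq_iff, ZMod.val_add_one_eq hm]
  rcases wrapLength_cases hmn a with ⟨h, h'⟩ | ⟨h, h'⟩ <;>
  rcases (ZMod.natCast_eq_natCast_iff_of_le (by omega) (by omega)).1 he with h'' | h'' | h'' <;>
  split_ifs <;> omega

theorem exists_eq_of_mem_support_arc (hmn : m ≤ n) (hn : n ≠ 1) {a c : ZMod m} (hac : a ≠ c)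
    {x : ZMod n} (hx₁ : x ∈ (arc hn a.val (wrapLength n a)).support)
    (hx₂ : x ∈ (arc hn c.val (wrapLength n c)).support) : ∃ w : ZMod m, x = (w.val : ZMod n) := by
  obtain ⟨l, hl, hl', rfl⟩ := (mem_support_arc hn).1 hx₁
  obtain ⟨l', hl₂, hl₂', he⟩ := (mem_support_arc hn).1 hx₂
  have hac : a.val ≠ c.val := (ZMod.val_injective m).ne hac
  have ha := wrapLength_cases hmn a
  have hc := wrapLength_cases hmn c
  by_cases hl0 : l = 0 ∨ l = n
  · refine ⟨0, ?_⟩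
    rcases hl0 with rfl | rfl <;> simp
  have hll' : l = l' := by
    rcases (ZMod.natCast_eq_natCast_iff_of_le (by omega) (by omega)).1 he with h | h | h <;> omega
  subst hll'
  -- two arcs overlap only in a common end
  have hlac : l = a.val ∨ l = c.val := by omega
  rcases hlac with rfl | rfl
  exacts [⟨a, rfl⟩, ⟨c, rfl⟩]

theorem containsSubdivision_of_le {m n : ℕ} (hm : 3 ≤ m) (hmn : m ≤ n) :
    ContainsSubdivision (cycleG n) (cycleG m) := by
  have : NeZero m := ⟨by omega⟩
  have hn : n ≠ 1 := by omega
  refine .of_orientation (fun a b => b = a + 1) (fun {a b} h => ?_) (ZMod.valEmbedding hmn)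
    (fun {a b} _ hab => (arc hn a.val (wrapLength n a)).copy (ZMod.valEmbedding_apply hmn a).symm
      (by rw [hab, ZMod.valEmbedding_apply, natCast_val_add_wrapLength (by omega) hmn]))
    (fun {a _} _ _ => (Walk.isPath_copy _ _ _).2 (isPath_arc hn ?_))
    (fun {a b} _ hab c hc => ?_) (fun {a b c d} _ _ hab hcd hne x hx₁ hx₂ => ?_)
  · obtain ⟨-, hor⟩ := cycleG_adj.1 h
    refine ⟨?_, hor.resolve_right⟩
    rintro rfl h
    rw [add_assoc, left_eq_add, one_add_one_eq_two, ← Nat.cast_ofNat, ZMod.natCast_eq_zero_iff] at h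
    exact absurd (Nat.le_of_dvd two_pos h) (by omega)
  · have := a.val_lt
    rcases wrapLength_cases hmn a with h | h <;> omega
  · rw [Walk.support_copy, ZMod.valEmbedding_apply] at hc
    exact hab ▸ eq_or_eq_of_mem_support_arc (by omega) hmn hn hc
  · subst hab hcd
    rw [Walk.support_copy] at hx₁ hx₂
    exact exists_eq_of_mem_support_arc hmn hn (fun h => hne (by rw [h])) hx₁ hx₂

end cycleG

instance (k : ℕ) : DecidableRel (cycleG k).Adj := fun _ _ => decidable_of_iff' _ cycleG_adj

instance {α β : Type*} {G : SimpleGraph α} {H : SimpleGraph β} [DecidableEq α] [DecidableEq β]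
    [DecidableRel G.Adj] [DecidableRel H.Adj] : DecidableRel (G □ H).Adj :=
  fun _ _ => decidable_of_iff' _ boxProd_adj

namespace TorusK33

def branch : Fin 3 ⊕ Fin 3 ↪ ZMod 2 × ZMod 2 × ZMod 3 :=
  ⟨Sum.elim ![(0, 0, 0), (0, 0, 1), (0, 1, 2)] ![(0, 0, 2), (0, 1, 0), (1, 0, 0)], by decide⟩

def path : (i j : Fin 3) →
    (cycleG 2 □ (cycleG 2 □ cycleG 3)).Walk (branch (.inl i)) (branch (.inr j))
  | 0, 0 => .cons (by decide) .nil
  | 0, 1 => .cons (by decide) .nil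
  | 0, 2 => .cons (by decide) .nil
  | 1, 0 => .cons (by decide) .nil
  | 1, 1 => .cons (v := (0, 1, 1)) (by decide) <| .cons (v := (1, 1, 1)) (by decide) <|
      .cons (v := (1, 1, 0)) (by decide) <| .cons (by decide) .nil
  | 1, 2 => .cons (v := (1, 0, 1)) (by decide) <| .cons (by decide) .nil
  | 2, 0 => .cons (by decide) .nil
  | 2, 1 => .cons (by decide) .nil
  | 2, 2 => .cons (v := (1, 1, 2)) (by decide) <| .cons (v := (1, 0, 2)) (by decide) <|
      .cons (by decide) .nil

def orientedPath : ∀ {a b : Fin 3 ⊕ Fin 3}, a.isLeft ∧ b.isRight →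
    (cycleG 2 □ (cycleG 2 □ cycleG 3)).Walk (branch a) (branch b)
  | .inl i, .inr j, _ => path i j
  | .inr _, _, h => absurd h.1 (by simp)
  | .inl _, .inl _, h => absurd h.2 (by simp)

theorem orientedPath_support_nodup :
    ∀ (a b : Fin 3 ⊕ Fin 3) (h : a.isLeft ∧ b.isRight), (orientedPath h).support.Nodup := by
  decide

theorem orientedPath_branch : ∀ (a b : Fin 3 ⊕ Fin 3) (h : a.isLeft ∧ b.isRight) c,
    branch c ∈ (orientedPath h).support → c = a ∨ c = b := by
  decide

set_option synthInstance.maxSize 1000 in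
theorem orientedPath_inter : ∀ (a b c d : Fin 3 ⊕ Fin 3) (h₁ : a.isLeft ∧ b.isRight)
    (h₂ : c.isLeft ∧ d.isRight), s(a, b) ≠ s(c, d) →
    ∀ x, x ∈ (orientedPath h₁).support → x ∈ (orientedPath h₂).support → ∃ w, x = branch w := by
  decide

theorem containsSubdivision :
    ContainsSubdivision (cycleG 2 □ (cycleG 2 □ cycleG 3))
      (completeBipartiteGraph (Fin 3) (Fin 3)) :=
  .of_orientation (fun a b => a.isLeft ∧ b.isRight)
    (fun {a b} h => by rcases a with _ | _ <;> rcases b with _ | _ <;> simp_all)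
    branch (fun _ hab => orientedPath hab)
    (fun _ hab => (Walk.isPath_def _).2 (orientedPath_support_nodup _ _ hab))
    (fun _ hab c hc => orientedPath_branch _ _ hab c hc)
    (fun _ _ hab hcd hne x hx₁ hx₂ => orientedPath_inter _ _ _ _ hab hcd hne x hx₁ hx₂)

end TorusK33

/-- The Cayley graph of `ℤ/2 × ℤ/2 × ℤ/n` (`n ≥ 3`, the graph product over a triangle) with
respect to `{(1,0,0), (0,1,0), (0,0,1)}` contains a subdivision of `K₃,₃`, hence is
non-planar. -/
theorem stmt_7 (n : ℕ) (hn : 3 ≤ n) :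
    ContainsSubdivision
      (cayleyGraphAdd (ZMod 2 × ZMod 2 × ZMod n) {(1, 0, 0), (0, 1, 0), (0, 0, 1)})
      (completeBipartiteGraph (Fin 3) (Fin 3)) ∧
    ¬ IsPlanar
      (cayleyGraphAdd (ZMod 2 × ZMod 2 × ZMod n) {(1, 0, 0), (0, 1, 0), (0, 0, 1)}) := by
  have hK33 : ContainsSubdivision
      (cayleyGraphAdd (ZMod 2 × ZMod 2 × ZMod n) {(1, 0, 0), (0, 1, 0), (0, 0, 1)})
      (completeBipartiteGraph (Fin 3) (Fin 3)) := by
    rw [cayleyGraphAdd_zmod2_zmod2_zmod]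
    exact (((cycleG.containsSubdivision_of_le le_rfl hn).boxProd_left _).boxProd_left _).trans
      TorusK33.containsSubdivision
  exact ⟨hK33, fun hplanar => hplanar.2 hK33⟩
end

section
/- Let G₁ and G₂ be groups with generating sets S₁, S₂ whose Cayley graphs are planar. Then the Cayley graph of the free product G₁ * G₂ with respect to the generating set S₁ ⊔ S₂ is planar. -/
open scoped commutatorElement

/-!
Every cycle of the Cayley graph of `G₁ ∗ G₂` lies in a single left coset `g G₁` or `g G₂`. Its
increments lie in `G₁ ∪ G₂`; the products of their maximal runs from one factor are nontrivial,
because a cycle does not revisit a vertex, so they form a reduced word whose product is nontrivial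
by the normal form theorem unless there is only one run. Each coset induces a copy of
`Cay(G₁, S₁)` resp. `Cay(G₂, S₂)`. In `K₅` and `K₃,₃` every edge lies on a common 4-cycle with a
fixed edge, so all paths of a subdivision of either graph lie on cycles through one fixed path,
hence in one coset, and the subdivision lives in a copy of the Cayley graph of a factor.
-/

open SimpleGraph

structure Subdivision {V W : Type} (G : SimpleGraph V) (K : SimpleGraph W) where
  branch : W ↪ V
  path : ∀ {a b : W}, K.Adj a b → G.Walk (branch a) (branch b)
  isPath : ∀ {a b : W} (h : K.Adj a b), (path h).IsPath
  path_symm : ∀ {a b : W} (h : K.Adj a b), path h.symm = (path h).reverse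
  eq_or_eq_of_branch_mem : ∀ {a b : W} (h : K.Adj a b) (c : W),
    branch c ∈ (path h).support → c = a ∨ c = b
  exists_branch_of_mem : ∀ {a b c d : W} (h₁ : K.Adj a b) (h₂ : K.Adj c d), s(a, b) ≠ s(c, d) →
    ∀ x, x ∈ (path h₁).support → x ∈ (path h₂).support → ∃ w : W, x = branch w

theorem containsSubdivision_iff_nonempty {V W : Type} {G : SimpleGraph V} {K : SimpleGraph W} :
    ContainsSubdivision G K ↔ Nonempty (Subdivision G K) :=
  ⟨fun ⟨f, p, h₁, h₂, h₃, h₄⟩ => ⟨⟨f, p, h₁, h₂, h₃, h₄⟩⟩,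
    fun ⟨D⟩ => ⟨D.branch, D.path, D.isPath, D.path_symm, D.eq_or_eq_of_branch_mem,
      D.exists_branch_of_mem⟩⟩

def EveryEdgeSharesSquareWith {W : Type} (K : SimpleGraph W) (a b : W) : Prop :=
  ∀ c d, K.Adj c d → ∃ x y, K.Adj b x ∧ K.Adj x y ∧ K.Adj y a ∧ a ≠ x ∧ b ≠ y ∧
    s(c, d) ∈ [s(a, b), s(b, x), s(x, y), s(y, a)]

namespace Subdivision

variable {V V' W : Type} {G : SimpleGraph V} {G' : SimpleGraph V'} {K : SimpleGraph W}

def map (D : Subdivision G K) (φ : G ↪g G') : Subdivision G' K where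
  branch := D.branch.trans φ.toEmbedding
  path h := (D.path h).map φ.toHom
  isPath h := (D.isPath h).map φ.injective
  path_symm h := by simp only [D.path_symm h]; exact (Walk.reverse_map _ _).symm
  eq_or_eq_of_branch_mem h c hc := by
    change φ (D.branch c) ∈ ((D.path h).map φ.toHom).support at hc
    rw [Walk.support_map, List.mem_map] at hc
    obtain ⟨x, hx, hxc⟩ := hc
    obtain rfl := φ.injective hxc
    exact D.eq_or_eq_of_branch_mem h c hx
  exists_branch_of_mem h₁ h₂ hne x hx₁ hx₂ := by
    change x ∈ ((D.path h₁).map φ.toHom).support at hx₁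
    change x ∈ ((D.path h₂).map φ.toHom).support at hx₂
    rw [Walk.support_map, List.mem_map] at hx₁ hx₂
    obtain ⟨y, hy₁, rfl⟩ := hx₁
    obtain ⟨y', hy₂, hyy'⟩ := hx₂
    rw [φ.injective hyy'] at hy₂
    obtain ⟨w, rfl⟩ := D.exists_branch_of_mem h₁ h₂ hne y hy₁ hy₂
    exact ⟨w, rfl⟩

def induce (D : Subdivision G K) (s : Set V) (hbranch : ∀ w, D.branch w ∈ s)
    (hpath : ∀ {a b : W} (h : K.Adj a b), ∀ x ∈ (D.path h).support, x ∈ s) :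
    Subdivision (G.induce s) K where
  branch := ⟨fun w => ⟨D.branch w, hbranch w⟩,
    fun _ _ h => D.branch.injective (congrArg Subtype.val h)⟩
  path h := (D.path h).induce s (hpath h)
  isPath h := .of_map (f := (Embedding.induce (G := G) s).toHom) <| by
    rw [Walk.map_induce]
    exact D.isPath h
  path_symm h := by
    apply Walk.map_injective_of_injective (f := (Embedding.induce (G := G) s).toHom)
      (Embedding.induce (G := G) s).injective
    rw [← Walk.reverse_map, Walk.map_induce, Walk.map_induce]
    exact D.path_symm h
  eq_or_eq_of_branch_mem h c hc := by
    rw [Walk.support_induce, List.mem_attachWith] at hc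
    exact D.eq_or_eq_of_branch_mem h c hc
  exists_branch_of_mem h₁ h₂ hne x hx₁ hx₂ := by
    rw [Walk.support_induce, List.mem_attachWith] at hx₁ hx₂
    obtain ⟨w, hw⟩ := D.exists_branch_of_mem h₁ h₂ hne x hx₁ hx₂
    exact ⟨w, Subtype.ext hw⟩

noncomputable def comap (D : Subdivision G' K) (φ : G ↪g G')
    (hbranch : ∀ w, D.branch w ∈ Set.range φ)
    (hpath : ∀ {a b : W} (h : K.Adj a b), ∀ x ∈ (D.path h).support, x ∈ Set.range φ) :
    Subdivision G K :=
  (D.induce _ hbranch hpath).map φ.isoInduceRange.symm.toEmbedding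

theorem mem_support_of_sym2_eq (D : Subdivision G K) {a b c d : W} (hab : K.Adj a b)
    (hcd : K.Adj c d) (he : s(a, b) = s(c, d)) {z : V} (hz : z ∈ (D.path hab).support) :
    z ∈ (D.path hcd).support := by
  rcases Sym2.eq_iff.1 he with ⟨rfl, rfl⟩ | ⟨rfl, rfl⟩
  · exact hz
  · rw [show D.path hcd = (D.path hab).reverse from D.path_symm hab, Walk.support_reverse,
      List.mem_reverse]
    exact hz

theorem eq_of_branch_mem_tail_support (D : Subdivision G K) {a b c : W} (h : K.Adj a b)
    (hc : D.branch c ∈ (D.path h).support.tail) : c = b := by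
  rcases D.eq_or_eq_of_branch_mem h c (List.mem_of_mem_tail hc) with rfl | rfl
  · have hnodup := (D.isPath h).support_nodup
    rw [← Walk.cons_tail_support, List.nodup_cons] at hnodup
    exact absurd hc hnodup.1
  · rfl

theorem disjoint_tail_support (D : Subdivision G K) {a b c d : W} (hab : K.Adj a b)
    (hcd : K.Adj c d) (hbd : b ≠ d) (had : a ≠ d) :
    (D.path hab).support.tail.Disjoint (D.path hcd).support.tail := by
  intro x hx₁ hx₂
  have hne : s(a, b) ≠ s(c, d) := by
    rw [Ne, Sym2.eq_iff]
    tauto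
  obtain ⟨w, rfl⟩ := D.exists_branch_of_mem hab hcd hne x (List.mem_of_mem_tail hx₁)
    (List.mem_of_mem_tail hx₂)
  exact hbd ((D.eq_of_branch_mem_tail_support hab hx₁).symm.trans
    (D.eq_of_branch_mem_tail_support hcd hx₂))

theorem nodup_tail_support_square (D : Subdivision G K) {a b x y : W} (hab : K.Adj a b)
    (hbx : K.Adj b x) (hxy : K.Adj x y) (hya : K.Adj y a) (hax : a ≠ x) (hby : b ≠ y) :
    ((D.path hab).append ((D.path hbx).append ((D.path hxy).append
      (D.path hya)))).support.tail.Nodup := by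
  simp only [Walk.tail_support_append, List.nodup_append', List.disjoint_append_right]
  refine ⟨(D.isPath hab).support_nodup.tail,
    ⟨(D.isPath hbx).support_nodup.tail,
      ⟨(D.isPath hxy).support_nodup.tail, (D.isPath hya).support_nodup.tail,
        D.disjoint_tail_support hxy hya hya.ne hax.symm⟩,
      D.disjoint_tail_support hbx hxy hxy.ne hby,
      D.disjoint_tail_support hbx hya hax.symm hab.ne.symm⟩,
    D.disjoint_tail_support hab hbx hbx.ne hax,
    D.disjoint_tail_support hab hxy hby hya.ne.symm,
    (D.disjoint_tail_support hya hab hab.ne hby.symm).symm⟩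

theorem exists_closed_walk_of_everyEdgeSharesSquareWith (D : Subdivision G K) {a b c d : W}
    (hab : K.Adj a b) (hsq : EveryEdgeSharesSquareWith K a b) (hcd : K.Adj c d) :
    ∃ q : G.Walk (D.branch a) (D.branch a), q.support.tail.Nodup ∧
      ∀ z, z ∈ (D.path hab).support ∨ z ∈ (D.path hcd).support → z ∈ q.support := by
  obtain ⟨x, y, hbx, hxy, hya, hax, hby, he⟩ := hsq c d hcd
  refine ⟨_, D.nodup_tail_support_square hab hbx hxy hya hax hby, ?_⟩
  simp only [Walk.mem_support_append_iff]
  rintro z (hz | hz)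
  · exact Or.inl hz
  · simp only [List.mem_cons, List.not_mem_nil, or_false] at he
    rcases he with he | he | he | he
    exacts [Or.inl (D.mem_support_of_sym2_eq hcd hab he hz),
      Or.inr (Or.inl (D.mem_support_of_sym2_eq hcd hbx he hz)),
      Or.inr (Or.inr (Or.inl (D.mem_support_of_sym2_eq hcd hxy he hz))),
      Or.inr (Or.inr (Or.inr (D.mem_support_of_sym2_eq hcd hya he hz)))]

end Subdivision

section CayleyGraph

variable {G H : Type} [Group G] [Group H]

theorem cayleyGraph_adj {S : Set G} {x y : G} :
    (cayleyGraph G S).Adj x y ↔ x ≠ y ∧ (x⁻¹ * y ∈ S ∨ y⁻¹ * x ∈ S) := by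
  simp only [cayleyGraph, fromRel_adj, ← inv_mul_eq_iff_eq_mul, exists_eq_right']

theorem cayleyGraph_adj_mul_left {S : Set G} (g x y : G) :
    (cayleyGraph G S).Adj (g * x) (g * y) ↔ (cayleyGraph G S).Adj x y := by
  simp only [cayleyGraph_adj, mul_inv_rev, mul_assoc, inv_mul_cancel_left, ne_eq, mul_right_inj]

def cayleyGraphMulLeft (S : Set G) (g : G) : cayleyGraph G S ≃g cayleyGraph G S where
  toEquiv := Equiv.mulLeft g
  map_rel_iff' := cayleyGraph_adj_mul_left g _ _

def cayleyGraphEmbedding {S : Set G} {T : Set H} (φ : G →* H) (hφ : Function.Injective φ)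
    (hST : ∀ x ≠ 1, φ x ∈ T ↔ x ∈ S) : cayleyGraph G S ↪g cayleyGraph H T where
  toFun := φ
  inj' := hφ
  map_rel_iff' {x y} := by
    simp only [Function.Embedding.coeFn_mk, cayleyGraph_adj, hφ.ne_iff, ← map_inv, ← map_mul]
    refine and_congr_right fun hxy => or_congr (hST _ ?_) (hST _ ?_)
    · rwa [Ne, inv_mul_eq_one]
    · rwa [Ne, inv_mul_eq_one, eq_comm]

theorem containsSubdivision_cayleyGraph_of_forall_inv_mul_mem {W : Type} {S : Set G} {T : Set H}
    {K : SimpleGraph W} (φ : G →* H) (hφ : Function.Injective φ)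
    (hST : ∀ x ≠ 1, φ x ∈ T ↔ x ∈ S) (hK : ∀ w, ∃ w', K.Adj w w')
    (D : Subdivision (cayleyGraph H T) K) (u : H)
    (hD : ∀ {c d : W} (h : K.Adj c d), ∀ z ∈ (D.path h).support, u⁻¹ * z ∈ φ.range) :
    ContainsSubdivision (cayleyGraph G S) K := by
  let ψ := (cayleyGraphEmbedding φ hφ hST).trans (cayleyGraphMulLeft T u).toEmbedding
  have hrange : ∀ {c d : W} (h : K.Adj c d), ∀ z ∈ (D.path h).support, z ∈ Set.range ψ := by
    intro c d h z hz
    obtain ⟨g, hg⟩ := hD h z hz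
    exact ⟨g, by simp [ψ, cayleyGraphEmbedding, cayleyGraphMulLeft, hg]⟩
  refine containsSubdivision_iff_nonempty.2 ⟨D.comap ψ (fun w => ?_) hrange⟩
  obtain ⟨w', hw⟩ := hK w
  exact hrange hw _ (D.path hw).start_mem_support

end CayleyGraph

namespace SimpleGraph.Walk

variable {H : Type} [Group H] {Γ : SimpleGraph H}

def increments {x y : H} (p : Γ.Walk x y) : List H :=
  p.darts.map fun d => d.fst⁻¹ * d.snd

theorem support_eq_map_inits_increments {x y : H} (p : Γ.Walk x y) :
    p.support = p.increments.inits.map (x * ·.prod) := by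
  induction p with
  | nil => simp [increments]
  | cons h p ih =>
    simp only [increments] at ih ⊢
    simp [ih, Function.comp_def, mul_assoc]

theorem mul_prod_increments {x y : H} (p : Γ.Walk x y) : x * p.increments.prod = y := by
  induction p with
  | nil => simp [increments]
  | cons h p ih =>
    simp only [increments] at ih ⊢
    simp [ih, mul_assoc]

end SimpleGraph.Walk

namespace List

theorem IsChain.iff_of_mem {α : Type*} {P : α → Prop} {l : List α}
    (h : l.IsChain fun a b => (P a ↔ P b)) {a b : α} (ha : a ∈ l) (hb : b ∈ l) : P a ↔ P b := by
  have key := h.induction (fun w => P w ↔ P (l.head (ne_nil_of_mem ha))) _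
    (fun _ _ h₁ h₂ => h₁.symm.trans h₂) (fun _ => Iff.rfl)
  exact (key a ha).trans (key b hb).symm

variable {M : Type*} [Monoid M]

theorem tail_map_prod_inits_append {s : List M} (hs : s ≠ []) (t : List M) :
    ((s ++ t).inits.map prod).tail =
      (s.inits.map prod).tail ++ (t.inits.map prod).tail.map (s.prod * ·) := by
  obtain ⟨a, s, rfl⟩ := exists_cons_of_ne_nil hs
  simp [inits_append, map_tail, Function.comp_def, mul_assoc]

theorem prod_mem_tail_map_prod_inits {s : List M} (hs : s ≠ []) :
    s.prod ∈ (s.inits.map prod).tail := by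
  obtain ⟨a, s, rfl⟩ := exists_cons_of_ne_nil hs
  simpa using ⟨s, prefix_refl s, rfl⟩

theorem not_nodup_tail_map_prod_inits_append {s t t' : List M} (hs : s ≠ []) (ht' : t' ≠ [])
    (htt' : t' <+: t) (ht'_one : t'.prod = 1) : ¬((s ++ t).inits.map prod).tail.Nodup := by
  intro hnodup
  rw [tail_map_prod_inits_append hs, nodup_append'] at hnodup
  refine hnodup.2.2 (prod_mem_tail_map_prod_inits hs) (mem_map.2 ⟨t'.prod, ?_, by simp [ht'_one]⟩)
  obtain ⟨r, rfl⟩ := htt'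
  rw [tail_map_prod_inits_append ht']
  exact mem_append_left _ (prod_mem_tail_map_prod_inits ht')

theorem prod_ne_one_of_isInfix {l m : List M} (hl : (l.inits.map prod).tail.Nodup)
    (hprod : l.prod = 1) (hm : m <:+: l) (hm_nil : m ≠ []) (hml : m ≠ l) : m.prod ≠ 1 := by
  obtain ⟨s, u, rfl⟩ := hm
  intro hm_one
  by_cases hs : s = []
  · subst hs
    have hu : u ≠ [] := by rintro rfl; simp at hml
    refine not_nodup_tail_map_prod_inits_append hm_nil hu (prefix_refl u) ?_ (by simpa using hl)
    simpa [hm_one] using hprod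
  · exact not_nodup_tail_map_prod_inits_append hs hm_nil (prefix_append m u) hm_one
      (by simpa using hl)

end List

namespace Monoid.Coprod

open Monoid

variable {G₁ G₂ : Type} [Group G₁] [Group G₂]

theorem disjoint_range_inl_range_inr :
    Disjoint (inl : G₁ →* G₁ ∗ G₂).range (inr : G₂ →* G₁ ∗ G₂).range := by
  rw [Subgroup.disjoint_def]
  rintro _ ⟨a, rfl⟩ ⟨b, hb⟩
  rw [← fst_apply_inl (N := G₂) a, ← hb, fst_apply_inr, map_one]

theorem inl_mem_image_union_iff {S₁ : Set G₁} {S₂ : Set G₂} {x : G₁} (hx : x ≠ 1) :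
    (inl x : G₁ ∗ G₂) ∈ inl '' S₁ ∪ inr '' S₂ ↔ x ∈ S₁ := by
  refine ⟨?_, fun h => Or.inl ⟨x, h, rfl⟩⟩
  rintro (⟨y, hy, hyx⟩ | ⟨y, -, hyx⟩)
  · rwa [← inl_injective hyx]
  · exact absurd (inl_injective ((Subgroup.disjoint_def.1 disjoint_range_inl_range_inr
      ⟨x, rfl⟩ ⟨y, hyx⟩).trans (map_one inl).symm)) hx

theorem inr_mem_image_union_iff {S₁ : Set G₁} {S₂ : Set G₂} {x : G₂} (hx : x ≠ 1) :
    (inr x : G₁ ∗ G₂) ∈ inl '' S₁ ∪ inr '' S₂ ↔ x ∈ S₂ := by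
  refine ⟨?_, fun h => Or.inr ⟨x, h, rfl⟩⟩
  rintro (⟨y, -, hyx⟩ | ⟨y, hy, hyx⟩)
  · exact absurd (inr_injective ((Subgroup.disjoint_def.1 disjoint_range_inl_range_inr
      ⟨y, hyx⟩ ⟨x, rfl⟩).trans (map_one inr).symm)) hx
  · rwa [← inr_injective hyx]

/-- The normal form theorem is available for the indexed free product `CoprodI`, to which
`G₁ ∗ G₂` maps as the free product of the family `cond · G₁ G₂`. -/
instance instGroupCond : ∀ b : Bool, Group (cond b G₁ G₂)
  | true => ‹_›
  | false => ‹_›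

theorem list_prod_ne_one_of_isChain {l : List (G₁ ∗ G₂)} (hl : l ≠ []) (h1 : ∀ x ∈ l, x ≠ 1)
    (hmem : ∀ x ∈ l, x ∈ inl.range ∨ x ∈ inr.range)
    (halt : l.IsChain fun x y => ¬(x ∈ inl.range ↔ y ∈ inl.range)) :
    l.prod ≠ 1 := by
  classical
  let M (b : Bool) : Type := cond b G₁ G₂
  let φ : G₁ ∗ G₂ →* CoprodI M :=
    lift (CoprodI.of (M := M) (i := true)) (CoprodI.of (M := M) (i := false))
  let letter (x : G₁ ∗ G₂) : Σ b, M b :=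
    if x ∈ inl.range then ⟨true, fst x⟩ else ⟨false, snd x⟩
  have hletter : ∀ x ∈ l, CoprodI.of (letter x).2 = φ x ∧ (letter x).2 ≠ 1 := by
    intro x hx
    rcases hmem x hx with ⟨a, rfl⟩ | ⟨b, rfl⟩
    · have ha : a ≠ 1 := fun ha => h1 _ hx (by rw [ha, map_one])
      rw [show letter (inl a) = ⟨true, a⟩ from if_pos ⟨a, rfl⟩]
      exact ⟨(lift_apply_inl _ _ a).symm, ha⟩
    · have hb : b ≠ 1 := fun hb => h1 _ hx (by rw [hb, map_one])
      have hA : inr b ∉ inl.range := fun hA =>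
        h1 _ hx (Subgroup.disjoint_def.1 disjoint_range_inl_range_inr hA ⟨b, rfl⟩)
      rw [show letter (inr b) = ⟨false, b⟩ from if_neg hA]
      exact ⟨(lift_apply_inr _ _ b).symm, hb⟩
  let w : CoprodI.Word M :=
    { toList := l.map letter
      ne_one := by
        simp only [List.mem_map, forall_exists_index, and_imp, forall_apply_eq_imp_iff₂]
        exact fun x hx => (hletter x hx).2
      chain_ne := (List.isChain_map letter).2 <| halt.imp fun x y h => by
        simp only [letter]; split_ifs <;> simp_all }
  have hw : w.prod = φ l.prod := by
    simp only [CoprodI.Word.prod, w, List.map_map, map_list_prod]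
    exact congrArg List.prod (List.map_congr_left fun x hx => (hletter x hx).1)
  intro hprod
  have : w = CoprodI.Word.empty := CoprodI.Word.equiv.symm.injective <| by
    simp only [CoprodI.Word.equiv, Equiv.coe_fn_symm_mk, hw, hprod, map_one,
      CoprodI.Word.prod_empty]
  exact hl (List.map_eq_nil_iff.1 (congrArg CoprodI.Word.toList this))

theorem forall_mem_range_or_of_prod_eq_one {t : List (G₁ ∗ G₂)}
    (hmem : ∀ x ∈ t, x ∈ inl.range ∨ x ∈ inr.range)
    (hprod : t.prod = 1) (hinfix : ∀ m, m <:+: t → m ≠ [] → m ≠ t → m.prod ≠ 1) :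
    (∀ x ∈ t, x ∈ inl.range) ∨ (∀ x ∈ t, x ∈ inr.range) := by
  classical
  set A := (inl : G₁ →* G₁ ∗ G₂).range
  set B := (inr : G₂ →* G₁ ∗ G₂).range
  by_contra! ⟨⟨x, hxt, hxA⟩, ⟨y, hyt, hyB⟩⟩
  replace hyA : y ∈ A := (hmem y hyt).resolve_right hyB
  -- Each maximal run of letters from one factor is a proper infix, so the run products form a
  -- reduced word with product `t.prod = 1`.
  set C := t.splitBy fun u v => decide (u ∈ A ↔ v ∈ A)
  have hC : C.flatten = t := List.flatten_splitBy _ t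
  have hrun : ∀ m ∈ C, ∀ u ∈ m, ∀ v ∈ m, (u ∈ A ↔ v ∈ A) := fun m hm u hu v hv =>
    ((List.isChain_of_mem_splitBy hm).imp fun _ _ h => of_decide_eq_true h).iff_of_mem hu hv
  have hsub : ∀ m ∈ C, ∀ u ∈ m, u ∈ t := fun m hm u hu =>
    hC ▸ List.mem_flatten.2 ⟨m, hm, hu⟩
  have hrun_prod : ∀ m ∈ C, m.prod ≠ 1 := fun m hm =>
    hinfix m (hC ▸ List.infix_of_mem_flatten hm) (List.ne_nil_of_mem_splitBy hm)
      (fun hmt => hxA ((hrun m hm y (hmt ▸ hyt) x (hmt ▸ hxt)).1 hyA))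
  have hside : ∀ m ∈ C, ∀ u ∈ m, (m.prod ∈ A ↔ u ∈ A) ∧ (m.prod ∈ A ∨ m.prod ∈ B) := by
    intro m hm u hu
    by_cases huA : u ∈ A
    · have hprodA : m.prod ∈ A :=
        Subgroup.list_prod_mem _ fun v hv => (hrun m hm u hu v hv).1 huA
      exact ⟨iff_of_true hprodA huA, Or.inl hprodA⟩
    · have hprodB : m.prod ∈ B := Subgroup.list_prod_mem _ fun v hv =>
        (hmem v (hsub m hm v hv)).resolve_left fun hvA => huA ((hrun m hm u hu v hv).2 hvA)
      exact ⟨iff_of_false (fun hprodA => hrun_prod m hm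
        (Subgroup.disjoint_def.1 disjoint_range_inl_range_inr hprodA hprodB)) huA, Or.inr hprodB⟩
  refine list_prod_ne_one_of_isChain (l := C.map List.prod) ?_ ?_ ?_ ?_
    (by rw [← List.prod_flatten, hC, hprod])
  · intro hnil
    rw [List.map_eq_nil_iff] at hnil
    simp [← hC, hnil] at hxt
  · simpa using hrun_prod
  · simp only [List.mem_map, forall_exists_index, and_imp, forall_apply_eq_imp_iff₂]
    intro m hm
    exact (hside m hm _ (List.head_mem (List.ne_nil_of_mem_splitBy hm))).2
  · refine (List.isChain_map _).2 ((List.isChain_getLast_head_splitBy _ t).imp_of_mem_imp ?_)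
    rintro m m' hm hm' ⟨hne, hne', hr⟩
    rw [(hside m hm _ (List.getLast_mem hne)).1, (hside m' hm' _ (List.head_mem hne')).1]
    simpa using hr

theorem forall_inv_mul_mem_of_nodup_tail_support {T : Set (G₁ ∗ G₂)}
    (hT : ∀ s ∈ T, s ∈ inl.range ∨ s ∈ inr.range)
    {x : G₁ ∗ G₂} (q : (cayleyGraph (G₁ ∗ G₂) T).Walk x x) (hq : q.support.tail.Nodup) :
    (∀ v ∈ q.support, x⁻¹ * v ∈ inl.range) ∨ (∀ v ∈ q.support, x⁻¹ * v ∈ inr.range) := by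
  set t := q.increments
  have hprod : t.prod = 1 := mul_eq_left.1 q.mul_prod_increments
  have hmem : ∀ g ∈ t, g ∈ inl.range ∨ g ∈ inr.range := by
    simp only [t, Walk.increments, List.mem_map, forall_exists_index, and_imp]
    rintro _ d - rfl
    rcases (cayleyGraph_adj.1 d.adj).2 with h | h
    · exact hT _ h
    · exact (hT _ h).imp (fun h' => by simpa using inv_mem h') (fun h' => by simpa using inv_mem h')
  have hnodup : (t.inits.map List.prod).tail.Nodup := by
    rw [q.support_eq_map_inits_increments, ← Function.comp_def (x * ·), ← List.map_map,
      ← List.map_tail] at hq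
    exact hq.of_map _
  rw [q.support_eq_map_inits_increments]
  simp only [List.mem_map, List.mem_inits, forall_exists_index, and_imp, forall_apply_eq_imp_iff₂,
    inv_mul_cancel_left]
  refine (forall_mem_range_or_of_prod_eq_one hmem hprod fun m hm hm_nil hmt =>
    List.prod_ne_one_of_isInfix hnodup hprod hm hm_nil hmt).imp ?_ ?_ <;>
  exact fun h l hl => Subgroup.list_prod_mem _ fun g hg => h g (hl.subset hg)

theorem containsSubdivision_cayleyGraph_factor {W : Type} {K : SimpleGraph W} {a b : W}
    (hab : K.Adj a b) (hsq : EveryEdgeSharesSquareWith K a b) (hK : ∀ w, ∃ w', K.Adj w w')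
    {S₁ : Set G₁} {S₂ : Set G₂}
    (h : ContainsSubdivision (cayleyGraph (G₁ ∗ G₂) (inl '' S₁ ∪ inr '' S₂)) K) :
    ContainsSubdivision (cayleyGraph G₁ S₁) K ∨ ContainsSubdivision (cayleyGraph G₂ S₂) K := by
  obtain ⟨D⟩ := containsSubdivision_iff_nonempty.1 h
  set A := (inl : G₁ →* G₁ ∗ G₂).range
  set B := (inr : G₂ →* G₁ ∗ G₂).range
  set u := D.branch a
  have hT : ∀ s ∈ inl '' S₁ ∪ inr '' S₂, s ∈ A ∨ s ∈ B := by
    rintro _ (⟨g, -, rfl⟩ | ⟨g, -, rfl⟩)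
    exacts [Or.inl ⟨g, rfl⟩, Or.inr ⟨g, rfl⟩]
  have hcoset : ∀ {c d : W} (hcd : K.Adj c d),
      (∀ z, z ∈ (D.path hab).support ∨ z ∈ (D.path hcd).support → u⁻¹ * z ∈ A) ∨
        (∀ z, z ∈ (D.path hab).support ∨ z ∈ (D.path hcd).support → u⁻¹ * z ∈ B) := by
    intro c d hcd
    obtain ⟨q, hq, hsub⟩ := D.exists_closed_walk_of_everyEdgeSharesSquareWith hab hsq hcd
    exact (forall_inv_mul_mem_of_nodup_tail_support hT q hq).imp
      (fun h z hz => h z (hsub z hz)) (fun h z hz => h z (hsub z hz))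
  have hu : u⁻¹ * D.branch b ≠ 1 := by
    rw [Ne, inv_mul_eq_one]
    exact fun h => hab.ne (D.branch.injective h)
  have hb_mem : D.branch b ∈ (D.path hab).support := (D.path hab).end_mem_support
  -- `u` and `D.branch b` lie in every one of these cosets, which forces the same factor for all.
  by_cases hA : u⁻¹ * D.branch b ∈ A
  · refine Or.inl (containsSubdivision_cayleyGraph_of_forall_inv_mul_mem inl inl_injective
      (fun _ hx => inl_mem_image_union_iff hx) hK D u fun hcd z hz => ?_)
    refine (hcoset hcd).elim (fun h => h z (Or.inr hz)) fun h => ?_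
    exact absurd (Subgroup.disjoint_def.1 disjoint_range_inl_range_inr hA (h _ (Or.inl hb_mem))) hu
  · refine Or.inr (containsSubdivision_cayleyGraph_of_forall_inv_mul_mem inr inr_injective
      (fun _ hx => inr_mem_image_union_iff hx) hK D u fun hcd z hz => ?_)
    exact (hcoset hcd).elim (fun h => absurd (h _ (Or.inl hb_mem)) hA) fun h => h z (Or.inr hz)

end Monoid.Coprod

theorem everyEdgeSharesSquareWith_completeGraph_fin_five :
    EveryEdgeSharesSquareWith (completeGraph (Fin 5)) 0 1 := by
  unfold EveryEdgeSharesSquareWith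
  decide

theorem everyEdgeSharesSquareWith_completeBipartiteGraph_fin_three :
    EveryEdgeSharesSquareWith (completeBipartiteGraph (Fin 3) (Fin 3)) (.inl 0) (.inr 0) := by
  unfold EveryEdgeSharesSquareWith
  simp only [completeBipartiteGraph_adj]
  decide

theorem stmt_11_general (G₁ G₂ : Type) [Group G₁] [Group G₂] (S₁ : Set G₁) (S₂ : Set G₂)
    (h₁ : IsPlanar (cayleyGraph G₁ S₁)) (h₂ : IsPlanar (cayleyGraph G₂ S₂)) :
    IsPlanar (cayleyGraph (Monoid.Coprod G₁ G₂)
      (⇑Monoid.Coprod.inl '' S₁ ∪ ⇑Monoid.Coprod.inr '' S₂)) := by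
  refine ⟨fun h => ?_, fun h => ?_⟩
  · have hK : ∀ w : Fin 5, ∃ w', (completeGraph (Fin 5)).Adj w w' := by decide
    exact (Monoid.Coprod.containsSubdivision_cayleyGraph_factor (by decide)
      everyEdgeSharesSquareWith_completeGraph_fin_five hK h).elim h₁.1 h₂.1
  · have hK : ∀ w, ∃ w', (completeBipartiteGraph (Fin 3) (Fin 3)).Adj w w' := by
      simp only [completeBipartiteGraph_adj]
      decide
    exact (Monoid.Coprod.containsSubdivision_cayleyGraph_factor (by simp)
      everyEdgeSharesSquareWith_completeBipartiteGraph_fin_three hK h).elim h₁.2 h₂.2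

/-- If `G₁`, `G₂` have generating sets `S₁`, `S₂` with planar Cayley graphs, then the Cayley
graph of the free product `G₁ * G₂` with respect to `S₁ ⊔ S₂` is planar. -/
theorem stmt_11 (G₁ G₂ : Type) [Group G₁] [Group G₂] (S₁ : Set G₁) (S₂ : Set G₂)
    (hgen₁ : Subgroup.closure S₁ = ⊤) (hgen₂ : Subgroup.closure S₂ = ⊤)
    (h₁ : IsPlanar (cayleyGraph G₁ S₁)) (h₂ : IsPlanar (cayleyGraph G₂ S₂)) :
    IsPlanar (cayleyGraph (Monoid.Coprod G₁ G₂)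
      (⇑Monoid.Coprod.inl '' S₁ ∪ ⇑Monoid.Coprod.inr '' S₂)) :=
  stmt_11_general G₁ G₂ S₁ S₂ h₁ h₂
end

section
/- Let Γ' be an induced subgraph of a graph product graph Γ of finite cyclic groups. Then G(Γ') embeds as a subgroup of G(Γ) (via the canonical map sending generators to generators), and consequently Cay(G(Γ')) is a subgraph of Cay(G(Γ)). -/
open scoped commutatorElement

/-!
Sending the generators outside `A` to `1` respects all defining relations of `G(Γ)` (a
relation involving such a generator becomes trivial, the others are relations of `G(Γ[A])`),
so it defines a retraction `G(Γ) → G(Γ[A])` that is a left inverse of the canonical map.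
An injective homomorphism sending generators to generators maps Cayley graph edges to edges.
-/

theorem cayleyGraph_adj_map {G H : Type} [Group G] [Group H] {S : Set G} {T : Set H}
    (f : G →* H) (hf : Function.Injective f) (hST : Set.MapsTo f S T) {a b : G}
    (hab : (cayleyGraph G S).Adj a b) : (cayleyGraph H T).Adj (f a) (f b) := by
  obtain ⟨hne, ⟨s, hs, rfl⟩ | ⟨s, hs, rfl⟩⟩ := hab
  · exact ⟨hf.ne hne, Or.inl ⟨f s, hST hs, map_mul f a s⟩⟩
  · exact ⟨hf.ne hne, Or.inr ⟨f s, hST hs, map_mul f b s⟩⟩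

namespace GraphProduct

variable {V : Type} {Γ : SimpleGraph V} {o : V → ℕ}

def of (v : V) : GraphProduct Γ o := PresentedGroup.of v

theorem of_pow_eq_one (v : V) : (of v : GraphProduct Γ o) ^ o v = 1 :=
  (map_pow (PresentedGroup.mk (graphProductRels Γ o)) (.of v) _).symm.trans
    (PresentedGroup.one_of_mem (Or.inl ⟨v, rfl⟩))

theorem commutatorElement_of_of_eq_one {v w : V} (h : Γ.Adj v w) :
    ⁅(of v : GraphProduct Γ o), (of w : GraphProduct Γ o)⁆ = 1 :=
  (map_commutatorElement (PresentedGroup.mk (graphProductRels Γ o)) (.of v) (.of w)).symm.trans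
    (PresentedGroup.one_of_mem (Or.inr ⟨v, w, h, rfl⟩))

section Lift

variable {G : Type*} [Group G] (f : V → G) (hpow : ∀ v, f v ^ o v = 1)
  (hcomm : ∀ v w, Γ.Adj v w → ⁅f v, f w⁆ = 1)

def lift : GraphProduct Γ o →* G :=
  PresentedGroup.toGroup (f := f) <| by
    rintro r (⟨v, rfl⟩ | ⟨v, w, h, rfl⟩)
    · rw [map_pow, FreeGroup.lift_apply_of, hpow]
    · rw [map_commutatorElement, FreeGroup.lift_apply_of, FreeGroup.lift_apply_of, hcomm v w h]

@[simp]
theorem lift_of (v : V) : lift f hpow hcomm (of v) = f v :=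
  PresentedGroup.toGroup.of _

theorem hom_ext {φ ψ : GraphProduct Γ o →* G}
    (h : ∀ v, φ (of v) = ψ (of v)) : φ = ψ :=
  PresentedGroup.ext h

end Lift

section InducedSubgraph

variable (Γ o) (A : Set V)

def inclusion : GraphProduct (Γ.induce A) (fun v => o v) →* GraphProduct Γ o :=
  lift (fun v => of (v : V)) (fun v => of_pow_eq_one (v : V))
    (fun _ _ h => commutatorElement_of_of_eq_one h)

theorem inclusion_of (v : A) : inclusion Γ o A (of v) = of (v : V) :=
  lift_of _ _ _ v

open Classical in
noncomputable def retraction : GraphProduct Γ o →* GraphProduct (Γ.induce A) (fun v => o v) :=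
  lift (fun v => if h : v ∈ A then of ⟨v, h⟩ else 1)
    (fun v => by split_ifs; exacts [of_pow_eq_one _, one_pow _])
    (fun v w hvw => by
      split_ifs
      exacts [commutatorElement_of_of_eq_one hvw, commutatorElement_one_right _,
        commutatorElement_one_left _, commutatorElement_one_left _])

theorem retraction_comp_inclusion :
    (retraction Γ o A).comp (inclusion Γ o A) = MonoidHom.id _ :=
  hom_ext fun v => by simp [inclusion, retraction, v.2]

theorem inclusion_injective : Function.Injective (inclusion Γ o A) :=
  Function.LeftInverse.injective (g := retraction Γ o A) fun x =>
    DFunLike.congr_fun (retraction_comp_inclusion Γ o A) x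

end InducedSubgraph

end GraphProduct

theorem stmt_15_general {V : Type} (Γ : SimpleGraph V) (o : V → ℕ) (A : Set V) :
    ∃ f : GraphProduct (Γ.induce A) (fun v => o v) →* GraphProduct Γ o,
      Function.Injective f ∧
      (∀ v : A, f (PresentedGroup.of v) = PresentedGroup.of (v : V)) ∧
      ∀ a b, (cayleyGraphGP (Γ.induce A) (fun v => o v)).Adj a b →
        (cayleyGraphGP Γ o).Adj (f a) (f b) := by
  refine ⟨GraphProduct.inclusion Γ o A, GraphProduct.inclusion_injective Γ o A,
    GraphProduct.inclusion_of Γ o A, fun _ _ => cayleyGraph_adj_map _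
      (GraphProduct.inclusion_injective Γ o A) ?_⟩
  rintro _ ⟨v, rfl⟩
  exact ⟨v, (GraphProduct.inclusion_of Γ o A v).symm⟩

/-- For an induced subgraph `Γ' = Γ[A]` of a graph product graph `Γ` of finite cyclic groups,
the canonical homomorphism `G(Γ') → G(Γ)` (sending generators to generators) is injective, and
consequently `Cay(G(Γ'))` is a subgraph of `Cay(G(Γ))` (the injection carries edges to
edges). -/
theorem stmt_15 {V : Type} [Finite V] (Γ : SimpleGraph V) (o : V → ℕ) (ho : ∀ v, 2 ≤ o v)
    (A : Set V) :
    ∃ f : GraphProduct (Γ.induce A) (fun v => o v) →* GraphProduct Γ o,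
      Function.Injective f ∧
      (∀ v : A, f (PresentedGroup.of v) = PresentedGroup.of (v : V)) ∧
      ∀ a b, (cayleyGraphGP (Γ.induce A) (fun v => o v)).Adj a b →
        (cayleyGraphGP Γ o).Adj (f a) (f b) :=
  stmt_15_general Γ o A
end
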